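/- Let E be a reflexive locally convex Hausdorff topological vector space over ℂ and T a continuous linear operator on E. Then the following are equivalent: (i) T is mean ergodic, i.e. M_0-ergodic; (ii) T is M_p-ergodic for some p > −1; (iii) T is M_p-ergodic for all p > −1. -/

import Mathlib

open Filter Finset Topology ZeroAtInfty
open scoped ENNReal ComplexOrder

noncomputable section

/-- An infinite matrix of complex numbers, with rows and columns indexed by `ℕ`. -/
abbrev Mat : Type := ℕ → ℕ → ℂ

/-- `A` is lower triangular: `A n k = 0` whenever `k > n`. -/
def Mat.LowerTri (A : Mat) : Prop := ∀ n k : ℕ, n < k → A n k = 0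

/-- The product of two (lower triangular) infinite matrices; for lower triangular
matrices all the sums involved are finite. -/
def Mat.mul (C A : Mat) : Mat := fun n k => ∑ j ∈ Finset.range (n + 1), C n j * A j k

/-- The identity matrix. -/
def Mat.one : Mat := fun n k => if n = k then 1 else 0

/-- The matrix `Δ`, with `Δ n n = 1`, `Δ n (n-1) = -1` (for `n ≥ 1`) and `0` elsewhere. -/
def Mat.delta : Mat := fun n i => (if n = i then 1 else 0) - (if n = i + 1 then 1 else 0)

/-- The `n`-th absolute row sum `∑_{i=0}^{n} |c_{ni}|` of a lower triangular matrix. -/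
def Mat.rowSum (C : Mat) (n : ℕ) : ℝ := ∑ i ∈ Finset.range (n + 1), ‖C n i‖

/-- Property (*C): the absolute row sums of `C` are (uniformly) bounded. -/
def Mat.StarC (C : Mat) : Prop := ∃ K : ℝ, ∀ n : ℕ, C.rowSum n ≤ K

/-- Property (*2C): (*C) together with: every column of `C` tends to `0`. -/
def Mat.Star2C (C : Mat) : Prop :=
  C.StarC ∧ ∀ i : ℕ, Tendsto (fun n => C n i) atTop (𝓝 (0 : ℂ))

/-- Property (*3C): the absolute row sums of `C` tend to `0`. -/
def Mat.Star3C (C : Mat) : Prop := Tendsto (fun n => C.rowSum n) atTop (𝓝 (0 : ℝ))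

/-- The pair `(A, B)` satisfies (*C): there is a lower triangular `C` with `CA = B`
whose absolute row sums are bounded. -/
def PairStarC (A B : Mat) : Prop := ∃ C : Mat, C.LowerTri ∧ Mat.mul C A = B ∧ C.StarC

/-- The pair `(A, B)` satisfies (*2C). -/
def PairStar2C (A B : Mat) : Prop := ∃ C : Mat, C.LowerTri ∧ Mat.mul C A = B ∧ C.Star2C

/-- The pair `(A, B)` satisfies (*3C). -/
def PairStar3C (A B : Mat) : Prop := ∃ C : Mat, C.LowerTri ∧ Mat.mul C A = B ∧ C.Star3C

/-- A probability matrix: lower triangular, nonnegative (real) entries, rows summing to `1`. -/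
def Mat.IsProb (A : Mat) : Prop :=
  A.LowerTri ∧ (∀ n k : ℕ, 0 ≤ A n k) ∧ ∀ n : ℕ, (∑ i ∈ Finset.range (n + 1), A n i) = 1

/-- The action of a lower triangular matrix on a sequence: `(Cx)_n = ∑_{i=0}^n c_{ni} x_i`. -/
def Mat.apply (C : Mat) (x : ℕ → ℂ) (n : ℕ) : ℂ := ∑ i ∈ Finset.range (n + 1), C n i * x i

section Ops

variable {E : Type*} [AddCommGroup E] [Module ℂ E] [UniformSpace E]
  [IsUniformAddGroup E] [ContinuousSMul ℂ E]

/-- `(A𝒯)_n = ∑_{i=0}^{n} a_{ni} T_i` for a sequence `𝒯` of continuous linear operators. -/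
def matOp (A : Mat) (T : ℕ → E →L[ℂ] E) (n : ℕ) : E →L[ℂ] E :=
  ∑ i ∈ Finset.range (n + 1), A n i • T i

/-- The sequence `𝒯` is `A`-bounded: `{(A𝒯)_n : n ∈ ℕ}` is equicontinuous. -/
def MatBounded (A : Mat) (T : ℕ → E →L[ℂ] E) : Prop :=
  Equicontinuous fun n => ⇑(matOp A T n)

/-- The sequence `𝒯` is `A`-null: `(A𝒯)_n x → 0` for every `x`. -/
def MatNull (A : Mat) (T : ℕ → E →L[ℂ] E) : Prop :=
  ∀ x : E, Tendsto (fun n => matOp A T n x) atTop (𝓝 (0 : E))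

/-- The sequence `𝒯` is `A`-ergodic: `(A𝒯)_n` converges pointwise to a continuous
linear operator `P`. -/
def MatErgodic (A : Mat) (T : ℕ → E →L[ℂ] E) : Prop :=
  ∃ P : E →L[ℂ] E, ∀ x : E, Tendsto (fun n => matOp A T n x) atTop (𝓝 (P x))

/-- `(AT)_n = ∑_{i=0}^{n} a_{ni} T^i` for a single operator `T`. -/
def matOpPow (A : Mat) (T : E →L[ℂ] E) (n : ℕ) : E →L[ℂ] E :=
  matOp A (fun i => T ^ i) n

/-- A single operator `T` is `A`-bounded if the sequence of its powers is. -/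
def OpBounded (A : Mat) (T : E →L[ℂ] E) : Prop := MatBounded A fun i => T ^ i

/-- A single operator `T` is `A`-null if the sequence of its powers is. -/
def OpNull (A : Mat) (T : E →L[ℂ] E) : Prop := MatNull A fun i => T ^ i

/-- A single operator `T` is `A`-ergodic if the sequence of its powers is. -/
def OpErgodic (A : Mat) (T : E →L[ℂ] E) : Prop := MatErgodic A fun i => T ^ i

end Ops

/-- `S(n, p) = ∑_{i=1}^{n} i^p`. -/
def Sp (p : ℝ) (n : ℕ) : ℝ := ∑ i ∈ Finset.range n, ((i : ℝ) + 1) ^ p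

/-- The probability matrix `M_p`, reindexed so that rows and columns start at `0`
(entry `(n, i)` here corresponds to entry `(n+1, i+1)` in the paper). -/
def Mp (p : ℝ) : Mat := fun n i =>
  if i ≤ n then ((((i : ℝ) + 1) ^ p / Sp p (n + 1) : ℝ) : ℂ) else 0

/-- The (lower triangular) inverse of `M_p`. -/
def MpInv (p : ℝ) : Mat := fun n i =>
  if i = n then ((Sp p (n + 1) / ((n : ℝ) + 1) ^ p : ℝ) : ℂ)
  else if i + 1 = n then ((-(Sp p n) / ((n : ℝ) + 1) ^ p : ℝ) : ℂ)
  else 0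

/-- The Banach space `ℓ∞` of bounded complex sequences with the sup norm. -/
abbrev ellInf : Type := ↥(lp (fun _ : ℕ => ℂ) ∞)

/-- The Banach space `c₀` of complex sequences tending to `0`, with the sup norm. -/
abbrev czero : Type := C₀(ℕ, ℂ)

section AuxReal

lemma Sp_nonneg (p : ℝ) (n : ℕ) : 0 ≤ Sp p n :=
  Finset.sum_nonneg fun i _ => Real.rpow_nonneg (by positivity) p

lemma Sp_pos (p : ℝ) (n : ℕ) : 0 < Sp p (n + 1) :=
  Finset.sum_pos (fun i _ => Real.rpow_pos_of_pos (by positivity) p) ⟨0, by simp⟩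

lemma Sp_succ (p : ℝ) (n : ℕ) : Sp p (n + 1) = Sp p n + ((n : ℝ) + 1) ^ p :=
  Finset.sum_range_succ _ n

lemma Sp_mono (p : ℝ) (n : ℕ) : Sp p n ≤ Sp p (n + 1) := by
  rw [Sp_succ]
  have : (0:ℝ) ≤ ((n:ℝ) + 1) ^ p := Real.rpow_nonneg (by positivity) p
  linarith

/-- Mean value theorem for `x ^ s` on `[a, a+1]`. -/
lemma rpow_mvt (s a : ℝ) (ha : 0 ≤ a) (h : 0 < a ∨ 0 < s) :
    ∃ ξ : ℝ, a < ξ ∧ ξ < a + 1 ∧ (a + 1) ^ s - a ^ s = s * ξ ^ (s - 1) := by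
  obtain ⟨c, hc, hceq⟩ := exists_hasDerivAt_eq_slope (fun x : ℝ => x ^ s)
    (fun x => s * x ^ (s - 1)) (by linarith : a < a + 1)
    (fun x hx => by
      refine (Real.continuousAt_rpow_const x s ?_).continuousWithinAt
      rcases h with h | h
      · exact Or.inl (by rcases hx with ⟨h1, _⟩; intro h0; rw [h0] at h1; linarith)
      · exact Or.inr h.le)
    (fun x hx => Real.hasDerivAt_rpow_const (Or.inl (by rcases hx with ⟨h1, _⟩; exact (lt_of_le_of_lt ha h1).ne')))
  refine ⟨c, hc.1, hc.2, ?_⟩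
  rw [hceq]; ring

lemma Sp_upper (p : ℝ) (hp : -1 < p) (m : ℕ) :
    Sp p m ≤ ((p + 1)⁻¹ + 1) * (m : ℝ) ^ (p + 1) := by
  have hp1 : (0:ℝ) < p + 1 := by linarith
  rcases le_or_gt 0 p with hp0 | hp0
  · have h1 : Sp p m ≤ (m : ℝ) ^ (p + 1) := by
      rcases Nat.eq_zero_or_pos m with rfl | hm
      · simp [Sp, Real.zero_rpow hp1.ne']
      have hm0 : (0:ℝ) < (m:ℝ) := by exact_mod_cast hm
      have step : Sp p m ≤ (m : ℝ) * (m : ℝ) ^ p := by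
        rw [Sp]
        have : ∑ i ∈ Finset.range m, ((i : ℝ) + 1) ^ p
            ≤ ∑ i ∈ Finset.range m, (m : ℝ) ^ p := by
          refine Finset.sum_le_sum fun i hi => ?_
          refine Real.rpow_le_rpow (by positivity) ?_ hp0
          have h := Finset.mem_range.mp hi
          have : (i + 1 : ℕ) ≤ m := h
          exact_mod_cast this
        simpa [Finset.sum_const, Finset.card_range, nsmul_eq_mul] using this
      rw [show p + 1 = 1 + p by ring, Real.rpow_add hm0, Real.rpow_one]
      exact step
    have h2 : (0:ℝ) ≤ (m : ℝ) ^ (p + 1) := Real.rpow_nonneg (by positivity) _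
    nlinarith [inv_nonneg.mpr hp1.le]
  · have key : ∀ k : ℕ, (p + 1) * Sp p k ≤ (k : ℝ) ^ (p + 1) := by
      intro k
      induction k with
      | zero => simp [Sp, Real.zero_rpow hp1.ne']
      | succ k ih =>
        obtain ⟨ξ, h1, h2, heq⟩ := rpow_mvt (p + 1) k (Nat.cast_nonneg k) (Or.inr hp1)
        have hξ0 : 0 < ξ := lt_of_le_of_lt (Nat.cast_nonneg k) h1
        have hmono : ((k : ℝ) + 1) ^ p ≤ ξ ^ p :=
          Real.rpow_le_rpow_of_nonpos hξ0 h2.le hp0.le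
        have hstep : (p + 1) * ((k : ℝ) + 1) ^ p ≤ ((k:ℝ) + 1) ^ (p + 1) - (k:ℝ) ^ (p + 1) := by
          rw [heq, show p + 1 - 1 = p by ring]
          nlinarith
        rw [Sp_succ]
        push_cast
        nlinarith
    have h := key m
    have h2 : (0:ℝ) ≤ (m : ℝ) ^ (p + 1) := Real.rpow_nonneg (by positivity) _
    nlinarith [Sp_nonneg p m, inv_nonneg.mpr hp1.le, mul_le_mul_of_nonneg_right h (inv_nonneg.mpr hp1.le),
      mul_inv_cancel₀ hp1.ne']
    
lemma Sp_lower (q : ℝ) (hq : -1 < q) (m : ℕ) :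
    (min 1 (q + 1)⁻¹) * (m : ℝ) ^ (q + 1) ≤ Sp q m := by
  have hq1 : (0:ℝ) < q + 1 := by linarith
  rcases le_or_gt q 0 with hq0 | hq0
  · have h1 : (m : ℝ) ^ (q + 1) ≤ Sp q m := by
      rcases Nat.eq_zero_or_pos m with rfl | hm
      · simp [Sp, Real.zero_rpow hq1.ne']
      have hm0 : (0:ℝ) < (m:ℝ) := by exact_mod_cast hm
      have step : (m : ℝ) * (m : ℝ) ^ q ≤ Sp q m := by
        rw [Sp]
        have : ∑ i ∈ Finset.range m, (m : ℝ) ^ q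
            ≤ ∑ i ∈ Finset.range m, ((i : ℝ) + 1) ^ q := by
          refine Finset.sum_le_sum fun i hi => ?_
          refine Real.rpow_le_rpow_of_nonpos (by positivity) ?_ hq0
          have h := Finset.mem_range.mp hi
          have : (i + 1 : ℕ) ≤ m := h
          exact_mod_cast this
        simpa [Finset.sum_const, Finset.card_range, nsmul_eq_mul] using this
      rw [show q + 1 = 1 + q by ring, Real.rpow_add hm0, Real.rpow_one]
      exact step
    have h2 : (0:ℝ) ≤ (m : ℝ) ^ (q + 1) := Real.rpow_nonneg (by positivity) _
    calc (min 1 (q + 1)⁻¹) * (m : ℝ) ^ (q + 1) ≤ 1 * (m : ℝ) ^ (q + 1) :=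
          mul_le_mul_of_nonneg_right (min_le_left _ _) h2
      _ = (m : ℝ) ^ (q + 1) := one_mul _
      _ ≤ Sp q m := h1
  · have key : ∀ k : ℕ, (k : ℝ) ^ (q + 1) ≤ (q + 1) * Sp q k := by
      intro k
      induction k with
      | zero => simp [Sp, Real.zero_rpow hq1.ne']
      | succ k ih =>
        obtain ⟨ξ, h1, h2, heq⟩ := rpow_mvt (q + 1) k (Nat.cast_nonneg k) (Or.inr hq1)
        have hξ0 : 0 ≤ ξ := le_of_lt (lt_of_le_of_lt (Nat.cast_nonneg k) h1)
        have hmono : ξ ^ q ≤ ((k : ℝ) + 1) ^ q :=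
          Real.rpow_le_rpow hξ0 h2.le hq0.le
        have hstep : ((k:ℝ) + 1) ^ (q + 1) - (k:ℝ) ^ (q + 1) ≤ (q + 1) * ((k : ℝ) + 1) ^ q := by
          rw [heq, show q + 1 - 1 = q by ring]
          nlinarith
        rw [Sp_succ]
        push_cast
        nlinarith
    have h := key m
    have h2 : (0:ℝ) ≤ (m : ℝ) ^ (q + 1) := Real.rpow_nonneg (by positivity) _
    calc (min 1 (q + 1)⁻¹) * (m : ℝ) ^ (q + 1) ≤ (q+1)⁻¹ * (m : ℝ) ^ (q + 1) :=
          mul_le_mul_of_nonneg_right (min_le_right _ _) h2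
      _ ≤ Sp q m := by
          rw [inv_mul_le_iff₀ hq1]
          exact h

lemma delta_bd (r : ℝ) (j : ℕ) :
    |((j:ℝ) + 2) ^ r - ((j:ℝ) + 1) ^ r| ≤ (|r| * max 1 ((2:ℝ) ^ (r - 1))) * ((j:ℝ) + 1) ^ (r - 1) := by
  obtain ⟨ξ, h1, h2, heq⟩ := rpow_mvt r ((j:ℝ) + 1) (by positivity) (Or.inl (by positivity))
  have hξ0 : (0:ℝ) < ξ := lt_trans (by positivity) h1
  rw [show ((j:ℝ) + 2) = ((j:ℝ) + 1) + 1 by ring, heq, abs_mul,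
    abs_of_nonneg (Real.rpow_nonneg hξ0.le _)]
  have hj1 : (0:ℝ) < (j:ℝ) + 1 := by positivity
  have hbd : ξ ^ (r - 1) ≤ max 1 ((2:ℝ) ^ (r - 1)) * ((j:ℝ) + 1) ^ (r - 1) := by
    rcases le_or_gt r 1 with hr | hr
    · have : ξ ^ (r - 1) ≤ ((j:ℝ) + 1) ^ (r - 1) :=
        Real.rpow_le_rpow_of_nonpos hj1 h1.le (by linarith)
      calc ξ ^ (r - 1) ≤ ((j:ℝ) + 1) ^ (r - 1) := this
        _ = 1 * ((j:ℝ) + 1) ^ (r - 1) := (one_mul _).symm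
        _ ≤ max 1 ((2:ℝ) ^ (r - 1)) * ((j:ℝ) + 1) ^ (r - 1) :=
            mul_le_mul_of_nonneg_right (le_max_left _ _) (Real.rpow_nonneg hj1.le _)
    · have hle : ξ ≤ 2 * ((j:ℝ) + 1) := by linarith
      have : ξ ^ (r - 1) ≤ (2 * ((j:ℝ) + 1)) ^ (r - 1) :=
        Real.rpow_le_rpow hξ0.le hle (by linarith)
      calc ξ ^ (r - 1) ≤ (2 * ((j:ℝ) + 1)) ^ (r - 1) := this
        _ = (2:ℝ) ^ (r - 1) * ((j:ℝ) + 1) ^ (r - 1) :=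
            Real.mul_rpow (by norm_num) hj1.le
        _ ≤ max 1 ((2:ℝ) ^ (r - 1)) * ((j:ℝ) + 1) ^ (r - 1) :=
            mul_le_mul_of_nonneg_right (le_max_right _ _) (Real.rpow_nonneg hj1.le _)
  calc |r| * ξ ^ (r - 1) ≤ |r| * (max 1 ((2:ℝ) ^ (r - 1)) * ((j:ℝ) + 1) ^ (r - 1)) :=
        mul_le_mul_of_nonneg_left hbd (abs_nonneg r)
    _ = (|r| * max 1 ((2:ℝ) ^ (r - 1))) * ((j:ℝ) + 1) ^ (r - 1) := by ring

end AuxReal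
section CmatSection

/-- The transfer matrix `C = M_q M_p^{-1}` (real entries). -/
def Cmat (p q : ℝ) (n j : ℕ) : ℝ :=
  if j = n then Sp p (n + 1) * ((n : ℝ) + 1) ^ (q - p) / Sp q (n + 1)
  else if j < n then
    Sp p (j + 1) * (((j : ℝ) + 1) ^ (q - p) - ((j : ℝ) + 2) ^ (q - p)) / Sp q (n + 1)
  else 0

lemma telescope (g : ℕ → ℝ) : ∀ i n : ℕ, i ≤ n →
    ∑ j ∈ Finset.Ico i n, (g j - g (j + 1)) = g i - g n := by
  intro i n
  induction n with
  | zero => intro h; interval_cases i; simp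
  | succ n ih =>
    intro h
    rcases Nat.lt_or_ge i (n + 1) with h' | h'
    · have hi : i ≤ n := by omega
      rw [Finset.sum_Ico_succ_top hi, ih hi]
      ring
    · have : i = n + 1 := by omega
      subst this
      simp

lemma Cmat_key (p q : ℝ) {n i : ℕ} (hi : i ≤ n) :
    ∑ j ∈ Finset.Icc i n, Cmat p q n j * (((i:ℝ) + 1) ^ p / Sp p (j + 1))
      = ((i:ℝ) + 1) ^ q / Sp q (n + 1) := by
  have hSq := Sp_pos q n
  rw [← Finset.Ico_add_one_right_eq_Icc, Finset.sum_Ico_succ_top hi]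
  have hoff : ∀ j ∈ Finset.Ico i n, Cmat p q n j * (((i:ℝ) + 1) ^ p / Sp p (j + 1))
      = ((i:ℝ) + 1) ^ p / Sp q (n + 1)
          * ((((j:ℝ) + 1) ^ (q - p)) - (((j:ℝ) + 2) ^ (q - p))) := by
    intro j hj
    obtain ⟨hij, hjn⟩ := Finset.mem_Ico.mp hj
    have hSp := Sp_pos p j
    rw [Cmat, if_neg (by omega), if_pos hjn]
    field_simp
  have htel : ∑ j ∈ Finset.Ico i n, ((((j:ℝ) + 1) ^ (q - p)) - (((j:ℝ) + 2) ^ (q - p)))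
      = ((i:ℝ) + 1) ^ (q - p) - ((n:ℝ) + 1) ^ (q - p) := by
    have h := telescope (fun j => ((j:ℝ) + 1) ^ (q - p)) i n hi
    push_cast at h
    simpa only [show ∀ x : ℕ, ((x:ℝ) + 1 + 1) = ((x:ℝ) + 2) from fun x => by ring] using h
  rw [Finset.sum_congr rfl hoff, ← Finset.mul_sum, htel]
  have hdiag : Cmat p q n n = Sp p (n + 1) * ((n : ℝ) + 1) ^ (q - p) / Sp q (n + 1) := by
    rw [Cmat, if_pos rfl]
  rw [hdiag]
  have hSp := Sp_pos p n
  have hm : ((i:ℝ) + 1) ^ p * ((i:ℝ) + 1) ^ (q - p) = ((i:ℝ) + 1) ^ q := by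
    rw [← Real.rpow_add (by positivity)]
    ring_nf
  field_simp
  linear_combination hm

lemma Mp_rowsum_real (p : ℝ) (j : ℕ) :
    ∑ i ∈ Finset.range (j + 1), (((i:ℝ) + 1) ^ p / Sp p (j + 1)) = 1 := by
  rw [← Finset.sum_div, ← Sp]
  exact div_self (Sp_pos p j).ne'

lemma tri_swap {M : Type*} [AddCommMonoid M] (n : ℕ) (f : ℕ → ℕ → M) :
    ∑ j ∈ Finset.range (n + 1), ∑ i ∈ Finset.range (j + 1), f j i
      = ∑ i ∈ Finset.range (n + 1), ∑ j ∈ Finset.Icc i n, f j i :=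
  Finset.sum_comm' (by
    intro j i
    simp only [Finset.mem_range, Finset.mem_Icc]
    omega)

lemma Cmat_rowsum (p q : ℝ) (n : ℕ) :
    ∑ j ∈ Finset.range (n + 1), Cmat p q n j = 1 := by
  calc ∑ j ∈ Finset.range (n + 1), Cmat p q n j
      = ∑ j ∈ Finset.range (n + 1), ∑ i ∈ Finset.range (j + 1),
          Cmat p q n j * (((i:ℝ) + 1) ^ p / Sp p (j + 1)) := by
        refine Finset.sum_congr rfl fun j _ => ?_
        rw [← Finset.mul_sum, Mp_rowsum_real, mul_one]
    _ = ∑ i ∈ Finset.range (n + 1), ∑ j ∈ Finset.Icc i n,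
          Cmat p q n j * (((i:ℝ) + 1) ^ p / Sp p (j + 1)) := tri_swap n _
    _ = ∑ i ∈ Finset.range (n + 1), ((i:ℝ) + 1) ^ q / Sp q (n + 1) :=
        Finset.sum_congr rfl fun i hi => Cmat_key p q (Finset.mem_range_succ_iff.mp hi)
    _ = 1 := Mp_rowsum_real q n

end CmatSection
section Toeplitz
open scoped Pointwise

variable {F : Type*} [AddCommGroup F] [Module ℝ F]

/-- An absolutely convex set absorbs absolutely-convex combinations. -/
lemma absConvex_sum_mem {V : Set F} (hVc : Convex ℝ V) (hVb : Balanced ℝ V)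
    (hV0 : (0 : F) ∈ V) {s : Finset ℕ} {t : ℕ → ℝ} {z : ℕ → F}
    (hz : ∀ j ∈ s, z j ∈ V) (ht : ∑ j ∈ s, |t j| ≤ 1) :
    ∑ j ∈ s, t j • z j ∈ V := by
  set S := ∑ j ∈ s, |t j| with hS
  have hS0 : 0 ≤ S := Finset.sum_nonneg fun j _ => abs_nonneg _
  rcases eq_or_lt_of_le hS0 with hS0' | hSpos
  · have hz0 : ∀ j ∈ s, t j = 0 := fun j hj => abs_eq_zero.mp
      ((Finset.sum_eq_zero_iff_of_nonneg fun j _ => abs_nonneg (t j)).mp hS0'.symm j hj)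
    rw [Finset.sum_congr rfl fun j hj => by rw [hz0 j hj, zero_smul]]
    simpa using hV0
  · set u : ℕ → F := fun j => if t j = 0 then 0 else (t j / |t j|) • z j with hu
    have hus : ∀ j ∈ s, u j ∈ V := by
      intro j hj
      by_cases h : t j = 0
      · simp [hu, h, hV0]
      · simp only [hu, h, if_neg, ite_false]
        refine hVb.smul_mem ?_ (hz j hj)
        rw [Real.norm_eq_abs, abs_div, abs_abs, div_self (abs_ne_zero.mpr h)]
    have key : ∀ j ∈ s, t j • z j = S • ((|t j| / S) • u j) := by
      intro j hj
      by_cases h : t j = 0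
      · simp [h, hu]
      · simp only [hu, if_neg h, smul_smul]
        rw [show S * (|t j| / S * (t j / |t j|)) = t j by
          field_simp]
    rw [Finset.sum_congr rfl key, ← Finset.smul_sum]
    refine hVb.smul_mem ?_ ?_
    · rw [Real.norm_eq_abs, abs_of_nonneg hS0]; exact ht
    · refine hVc.sum_mem (fun j hj => by positivity) ?_ hus
      rw [← Finset.sum_div, div_self hSpos.ne']

variable [TopologicalSpace F] [IsTopologicalAddGroup F] [ContinuousSMul ℝ F]
  [LocallyConvexSpace ℝ F]

/-- Toeplitz's theorem on regular summability methods, in a locally convex space. -/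
lemma toeplitz (c : ℕ → ℕ → ℝ) (K : ℝ)
    (hK : ∀ n, ∑ j ∈ Finset.range (n + 1), |c n j| ≤ K)
    (hcol : ∀ j, Filter.Tendsto (fun n => c n j) Filter.atTop (nhds 0))
    (hrow : ∀ n, ∑ j ∈ Finset.range (n + 1), c n j = 1)
    {y : ℕ → F} {l : F} (hy : Filter.Tendsto y Filter.atTop (nhds l)) :
    Filter.Tendsto (fun n => ∑ j ∈ Finset.range (n + 1), c n j • y j)
      Filter.atTop (nhds l) := by
  set z : ℕ → F := fun j => y j - l with hz
  have hzl : Filter.Tendsto z Filter.atTop (nhds 0) := by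
    simpa [hz] using hy.sub_const l
  have hsplit : ∀ n, ∑ j ∈ Finset.range (n + 1), c n j • y j
      = (∑ j ∈ Finset.range (n + 1), c n j • z j) + l := by
    intro n
    have h1 : ∀ j ∈ Finset.range (n + 1), c n j • y j = c n j • z j + c n j • l := by
      intro j _
      simp [hz, smul_sub]
    rw [Finset.sum_congr rfl h1, Finset.sum_add_distrib, ← Finset.sum_smul, hrow, one_smul]
  have hmain : Filter.Tendsto (fun n => ∑ j ∈ Finset.range (n + 1), c n j • z j)
      Filter.atTop (nhds 0) := by
    have hK0 : 0 ≤ K := le_trans (Finset.sum_nonneg fun j _ => abs_nonneg _) (hK 0)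
    set K' : ℝ := K + 1 with hK'
    have hK'pos : (0:ℝ) < K' := by linarith
    rw [(nhds_hasBasis_absConvex ℝ F).tendsto_right_iff]
    rintro U ⟨hU, hUb, hUc⟩
    have hU0 : (0 : F) ∈ U := mem_of_mem_nhds hU
    have hhalf : ((2:ℝ)⁻¹) • U ∈ nhds (0 : F) := by
      have := (set_smul_mem_nhds_zero_iff (by norm_num : ((2:ℝ)⁻¹) ≠ 0)).mpr hU
      simpa using this
    have hsmall : ((2 * K')⁻¹) • U ∈ nhds (0 : F) := by
      have := (set_smul_mem_nhds_zero_iff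
        (by positivity : ((2 * K')⁻¹ : ℝ) ≠ 0)).mpr hU
      simpa using this
    obtain ⟨N, hN⟩ := Filter.eventually_atTop.mp (hzl.eventually_mem hsmall)
    have hw : ∀ j, N ≤ j → (2 * K') • z j ∈ U := by
      intro j hj
      have := hN j hj
      rwa [Set.mem_inv_smul_set_iff₀ (by positivity : ((2 * K') : ℝ) ≠ 0)] at this
    have hhead : Filter.Tendsto (fun n => ∑ j ∈ Finset.range N, c n j • z j)
        Filter.atTop (nhds 0) := by
      have : Filter.Tendsto (fun n => ∑ j ∈ Finset.range N, c n j • z j)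
          Filter.atTop (nhds (∑ j ∈ Finset.range N, (0:F))) := by
        refine tendsto_finset_sum _ fun j _ => ?_
        simpa using (hcol j).smul_const (z j)
      simpa using this
    filter_upwards [hhead.eventually_mem hhalf, Filter.eventually_ge_atTop N]
      with n hn1 hn2
    have hdecomp : ∑ j ∈ Finset.range (n + 1), c n j • z j
        = (∑ j ∈ Finset.range N, c n j • z j)
          + ∑ j ∈ Finset.Ico N (n + 1), c n j • z j := by
      rw [Finset.range_eq_Ico, ← Finset.sum_Ico_consecutive _ (Nat.zero_le N) (by omega),
        ← Finset.range_eq_Ico]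
    rw [hdecomp]
    have htail : ∑ j ∈ Finset.Ico N (n + 1), c n j • z j ∈ ((2:ℝ)⁻¹) • U := by
      have heq : ∀ j ∈ Finset.Ico N (n + 1),
          c n j • z j = (2:ℝ)⁻¹ • ((c n j / K') • ((2 * K') • z j)) := by
        intro j _
        rw [smul_smul, smul_smul]
        congr 1
        field_simp
      rw [Finset.sum_congr rfl heq, ← Finset.smul_sum]
      refine Set.smul_mem_smul_set ?_
      refine absConvex_sum_mem hUc hUb hU0 ?_ ?_
      · intro j hj
        exact hw j (Finset.mem_Ico.mp hj).1
      · have hsub : ∑ j ∈ Finset.Ico N (n + 1), |c n j / K'|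
            ≤ ∑ j ∈ Finset.range (n + 1), |c n j / K'| := by
          refine Finset.sum_le_sum_of_subset_of_nonneg ?_ fun j _ _ => abs_nonneg _
          rw [Finset.range_eq_Ico]
          exact Finset.Ico_subset_Ico (Nat.zero_le N) le_rfl
        refine le_trans hsub ?_
        have habs : ∀ j, |c n j / K'| = |c n j| / K' := fun j => by
          rw [abs_div, abs_of_pos hK'pos]
        rw [Finset.sum_congr rfl fun j _ => habs j, ← Finset.sum_div, div_le_one hK'pos]
        linarith [hK n]
    obtain ⟨u1, hu1, hequ1⟩ := hn1
    obtain ⟨u2, hu2, hequ2⟩ := htail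
    rw [← hequ1, ← hequ2]
    have := hUc hu1 hu2 (by norm_num : (0:ℝ) ≤ 2⁻¹) (by norm_num : (0:ℝ) ≤ 2⁻¹) (by norm_num)
    simpa using this
  have : (fun n => ∑ j ∈ Finset.range (n + 1), c n j • y j)
      = fun n => (∑ j ∈ Finset.range (n + 1), c n j • z j) + l := funext hsplit
  rw [this]
  simpa using hmain.add_const l

end Toeplitz
section CmatBounds

lemma cast_succ_real (m : ℕ) : ((m + 1 : ℕ) : ℝ) = (m : ℝ) + 1 := by push_cast; ring

lemma Sp_tendsto_atTop (q : ℝ) (hq : -1 < q) :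
    Filter.Tendsto (fun n : ℕ => Sp q (n + 1)) Filter.atTop Filter.atTop := by
  have hq1 : (0:ℝ) < q + 1 := by linarith
  have hcq : (0:ℝ) < min 1 (q + 1)⁻¹ := lt_min one_pos (by positivity)
  have h1 : Filter.Tendsto (fun n : ℕ => ((n:ℝ) + 1)) Filter.atTop Filter.atTop :=
    Filter.tendsto_atTop_add_const_right _ 1 tendsto_natCast_atTop_atTop
  have h2 : Filter.Tendsto (fun n : ℕ => ((n:ℝ) + 1) ^ (q + 1)) Filter.atTop Filter.atTop :=
    (tendsto_rpow_atTop hq1).comp h1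
  have h3 : Filter.Tendsto (fun n : ℕ => (min 1 (q + 1)⁻¹) * ((n:ℝ) + 1) ^ (q + 1))
      Filter.atTop Filter.atTop := h2.const_mul_atTop hcq
  refine Filter.tendsto_atTop_mono (fun n => ?_) h3
  have := Sp_lower q hq (n + 1)
  rwa [cast_succ_real] at this

lemma Cmat_col (p q : ℝ) (hq : -1 < q) (j : ℕ) :
    Filter.Tendsto (fun n => Cmat p q n j) Filter.atTop (nhds 0) := by
  have hlim : Filter.Tendsto
      (fun n : ℕ => (Sp p (j + 1) * (((j:ℝ) + 1) ^ (q - p) - ((j:ℝ) + 2) ^ (q - p)))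
        / Sp q (n + 1)) Filter.atTop (nhds 0) :=
    Filter.Tendsto.div_atTop tendsto_const_nhds (Sp_tendsto_atTop q hq)
  refine hlim.congr' ?_
  filter_upwards [Filter.eventually_ge_atTop (j + 1)] with n hn
  rw [Cmat, if_neg (by omega), if_pos (by omega)]

lemma Cmat_absRowSum_le (p q : ℝ) (hp : -1 < p) (hq : -1 < q) :
    ∃ K : ℝ, ∀ n, ∑ j ∈ Finset.range (n + 1), |Cmat p q n j| ≤ K := by
  set Cp : ℝ := (p + 1)⁻¹ + 1 with hCpdef
  set D : ℝ := |q - p| * max 1 ((2:ℝ) ^ (q - p - 1)) with hDdef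
  set cq : ℝ := min 1 (q + 1)⁻¹ with hcqdef
  have hCp : (0:ℝ) < Cp := by
    have h0 : (0:ℝ) < p + 1 := by linarith
    have : (0:ℝ) < (p + 1)⁻¹ := by positivity
    simp only [hCpdef]; linarith
  have hD : (0:ℝ) ≤ D :=
    mul_nonneg (abs_nonneg _) (le_trans zero_le_one (le_max_left _ _))
  have hcq : (0:ℝ) < cq := by
    have h1 : (0:ℝ) < q + 1 := by linarith
    exact lt_min one_pos (by positivity)
  refine ⟨Cp * D + Cp / cq, fun n => ?_⟩
  rw [Finset.sum_range_succ]
  have hSq := Sp_pos q n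
  have hdiag : |Cmat p q n n| ≤ Cp / cq := by
    rw [Cmat, if_pos rfl, abs_div, abs_of_pos hSq, abs_mul,
      abs_of_nonneg (Sp_nonneg p _),
      abs_of_nonneg (Real.rpow_nonneg (by positivity) _)]
    rw [div_le_div_iff₀ hSq hcq]
    have h1 : Sp p (n + 1) ≤ Cp * ((n:ℝ) + 1) ^ (p + 1) := by
      have := Sp_upper p hp (n + 1); rwa [cast_succ_real] at this
    have h2 : ((n:ℝ) + 1) ^ (p + 1) * ((n:ℝ) + 1) ^ (q - p) = ((n:ℝ) + 1) ^ (q + 1) := by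
      rw [← Real.rpow_add (by positivity)]; ring_nf
    have h3 : cq * ((n:ℝ) + 1) ^ (q + 1) ≤ Sp q (n + 1) := by
      have := Sp_lower q hq (n + 1); rwa [cast_succ_real] at this
    have h4 : (0:ℝ) ≤ ((n:ℝ) + 1) ^ (q - p) := Real.rpow_nonneg (by positivity) _
    calc Sp p (n + 1) * ((n:ℝ) + 1) ^ (q - p) * cq
        ≤ (Cp * ((n:ℝ) + 1) ^ (p + 1)) * ((n:ℝ) + 1) ^ (q - p) * cq := by
          refine mul_le_mul_of_nonneg_right (mul_le_mul_of_nonneg_right h1 h4) hcq.le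
      _ = Cp * (cq * (((n:ℝ) + 1) ^ (p + 1) * ((n:ℝ) + 1) ^ (q - p))) := by ring
      _ = Cp * (cq * ((n:ℝ) + 1) ^ (q + 1)) := by rw [h2]
      _ ≤ Cp * Sp q (n + 1) := mul_le_mul_of_nonneg_left h3 hCp.le
  have hoff : ∑ j ∈ Finset.range n, |Cmat p q n j| ≤ Cp * D := by
    have hterm : ∀ j ∈ Finset.range n,
        |Cmat p q n j| ≤ Cp * D * (((j:ℝ) + 1) ^ q) / Sp q (n + 1) := by
      intro j hj
      have hjn := Finset.mem_range.mp hj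
      rw [Cmat, if_neg (by omega), if_pos hjn, abs_div, abs_of_pos hSq, abs_mul,
        abs_of_nonneg (Sp_nonneg p _)]
      refine div_le_div_of_nonneg_right ?_ hSq.le
      have h1 : Sp p (j + 1) ≤ Cp * ((j:ℝ) + 1) ^ (p + 1) := by
        have := Sp_upper p hp (j + 1); rwa [cast_succ_real] at this
      have h2 : |((j:ℝ) + 1) ^ (q - p) - ((j:ℝ) + 2) ^ (q - p)|
          ≤ D * ((j:ℝ) + 1) ^ (q - p - 1) := by
        rw [abs_sub_comm]
        exact delta_bd (q - p) j
      have h3 : ((j:ℝ) + 1) ^ (p + 1) * ((j:ℝ) + 1) ^ (q - p - 1) = ((j:ℝ) + 1) ^ q := by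
        rw [← Real.rpow_add (by positivity)]; ring_nf
      have h4 : (0:ℝ) ≤ ((j:ℝ) + 1) ^ (p + 1) := Real.rpow_nonneg (by positivity) _
      have h5 : (0:ℝ) ≤ ((j:ℝ) + 1) ^ (q - p - 1) := Real.rpow_nonneg (by positivity) _
      calc Sp p (j + 1) * |((j:ℝ) + 1) ^ (q - p) - ((j:ℝ) + 2) ^ (q - p)|
          ≤ (Cp * ((j:ℝ) + 1) ^ (p + 1)) * (D * ((j:ℝ) + 1) ^ (q - p - 1)) := by
            refine mul_le_mul h1 h2 (abs_nonneg _) (by positivity)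
        _ = Cp * D * (((j:ℝ) + 1) ^ (p + 1) * ((j:ℝ) + 1) ^ (q - p - 1)) := by ring
        _ = Cp * D * (((j:ℝ) + 1) ^ q) := by rw [h3]
    calc ∑ j ∈ Finset.range n, |Cmat p q n j|
        ≤ ∑ j ∈ Finset.range n, Cp * D * (((j:ℝ) + 1) ^ q) / Sp q (n + 1) :=
          Finset.sum_le_sum hterm
      _ = Cp * D * Sp q n / Sp q (n + 1) := by
          rw [← Finset.sum_div, ← Finset.mul_sum, ← Sp]
      _ ≤ Cp * D * Sp q (n + 1) / Sp q (n + 1) := by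
          refine div_le_div_of_nonneg_right ?_ hSq.le
          exact mul_le_mul_of_nonneg_left (Sp_mono q n) (mul_nonneg hCp.le hD)
      _ = Cp * D := by field_simp
  exact add_le_add hoff hdiag

end CmatBounds
section Transfer

variable {E : Type*} [AddCommGroup E] [Module ℂ E] [UniformSpace E]
  [IsUniformAddGroup E] [ContinuousSMul ℂ E]

lemma matOp_apply_eq (s : ℝ) (T : E →L[ℂ] E) (x : E) (m : ℕ) :
    matOp (Mp s) (fun i => T ^ i) m x
      = ∑ i ∈ Finset.range (m + 1),
          ((((i:ℝ) + 1) ^ s / Sp s (m + 1) : ℝ) : ℂ) • ((T ^ i) x) := by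
  simp only [matOp, ContinuousLinearMap.coe_sum', Finset.sum_apply,
    ContinuousLinearMap.coe_smul', Pi.smul_apply]
  refine Finset.sum_congr rfl fun i hi => ?_
  rw [Mp, if_pos (Finset.mem_range_succ_iff.mp hi)]

lemma expand_Cmat (p q : ℝ) (T : E →L[ℂ] E) (x : E) (n : ℕ) :
    matOp (Mp q) (fun i => T ^ i) n x
      = ∑ j ∈ Finset.range (n + 1), Cmat p q n j • matOp (Mp p) (fun i => T ^ i) j x := by
  have hR : ∀ j ∈ Finset.range (n + 1),
      Cmat p q n j • matOp (Mp p) (fun i => T ^ i) j x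
        = ∑ i ∈ Finset.range (j + 1),
            ((Cmat p q n j * (((i:ℝ) + 1) ^ p / Sp p (j + 1)) : ℝ) : ℂ) • ((T ^ i) x) := by
    intro j _
    rw [matOp_apply_eq, Finset.smul_sum]
    refine Finset.sum_congr rfl fun i _ => ?_
    rw [← smul_assoc]
    congr 1
    rw [Complex.real_smul]
    push_cast
    ring
  rw [Finset.sum_congr rfl hR, tri_swap n, matOp_apply_eq]
  refine Finset.sum_congr rfl fun i hi => ?_
  rw [← Finset.sum_smul]
  congr 1
  rw [← Complex.ofReal_sum, Cmat_key p q (Finset.mem_range_succ_iff.mp hi)]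

theorem OpErgodic.transfer [LocallyConvexSpace ℝ E] {p q : ℝ} (hp : -1 < p) (hq : -1 < q)
    (T : E →L[ℂ] E) (h : OpErgodic (Mp p) T) : OpErgodic (Mp q) T := by
  haveI : ContinuousSMul ℝ E := by
    constructor
    have hc : Continuous fun rx : ℝ × E => ((rx.1 : ℂ)) • rx.2 :=
      (Complex.continuous_ofReal.comp continuous_fst).smul continuous_snd
    simpa only [Complex.coe_smul] using hc
  obtain ⟨P, hP⟩ := h
  obtain ⟨K, hK⟩ := Cmat_absRowSum_le p q hp hq
  refine ⟨P, fun x => ?_⟩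
  have ht := toeplitz (Cmat p q) K hK (Cmat_col p q hq) (Cmat_rowsum p q) (hP x)
  exact ht.congr fun n => (expand_Cmat p q T x n).symm

end Transfer
/-- For an operator `T` on a reflexive locally convex Hausdorff space (barrelled, and
bounded sets relatively weakly compact) the following are equivalent: (i) `T` is mean
ergodic (i.e. `M_0`-ergodic); (ii) `T` is `M_p`-ergodic for some `p > -1`; (iii) `T` is
`M_p`-ergodic for all `p > -1`. -/
theorem statement19 {E : Type*} [AddCommGroup E] [Module ℂ E] [UniformSpace E]
    [IsUniformAddGroup E] [ContinuousSMul ℂ E] [LocallyConvexSpace ℝ E] [T2Space E]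
    [BarrelledSpace ℂ E]
    (hrefl : ∀ s : Set E, Bornology.IsVonNBounded ℂ s →
      IsCompact (closure (toWeakSpace ℂ E '' s)))
    (T : E →L[ℂ] E) :
    [OpErgodic (Mp 0) T,
      ∃ p : ℝ, -1 < p ∧ OpErgodic (Mp p) T,
      ∀ p : ℝ, -1 < p → OpErgodic (Mp p) T].TFAE := by
  tfae_have 1 → 2 := fun h => ⟨0, by norm_num, h⟩
  tfae_have 2 → 3 := by
    rintro ⟨p, hp, hP⟩ q hq
    exact OpErgodic.transfer hp hq T hP
  tfae_have 3 → 1 := fun h => h 0 (by norm_num)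
  tfae_finish
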